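/- Let ℝ⁺ be the set of nonnegative decimal expansions, i.e. pairs (a₀, (a_n)_{n≥1}) with a₀ ∈ ℕ and a_n ∈ {0,...,9}, quotiented by the identification of expansions ending in a tail of nines with the corresponding terminating expansion, ordered lexicographically. Then every nonempty subset of ℝ⁺ that is bounded above has a least upper bound in ℝ⁺. -/

import Mathlib

namespace Stmt12

/-- A nonnegative decimal expansion `(a₀, (aₙ)ₙ≥₁)`: the digit `a_{n+1}` is `a.2 n`. -/
abbrev Expansion : Type := ℕ × (ℕ → Fin 10)

/-- `nineTail x y` says that `x` ends in a tail of nines and `y` is the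
corresponding terminating expansion. -/
def nineTail (x y : Expansion) : Prop :=
  ((∀ n, (x.2 n : ℕ) = 9) ∧ y.1 = x.1 + 1 ∧ (∀ n, (y.2 n : ℕ) = 0)) ∨
  (∃ N, x.1 = y.1 ∧ (∀ m < N, x.2 m = y.2 m) ∧ ((x.2 N : ℕ) + 1 = (y.2 N : ℕ)) ∧
    (∀ m, N < m → (x.2 m : ℕ) = 9 ∧ (y.2 m : ℕ) = 0))

/-- Identification of expansions ending in a tail of nines with the
corresponding terminating expansions. -/
def ident (x y : Expansion) : Prop := nineTail x y ∨ nineTail y x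

/-- ℝ⁺: nonnegative decimal expansions up to identification of tails of nines. -/
def RPlus : Type := Quot ident

/-- Strict lexicographic order on expansions. -/
def lexLt (x y : Expansion) : Prop :=
  x.1 < y.1 ∨ (x.1 = y.1 ∧ ∃ n, (∀ m < n, x.2 m = y.2 m) ∧ x.2 n < y.2 n)

/-- The induced (non-strict) order on ℝ⁺. -/
def le (u v : RPlus) : Prop :=
  u = v ∨ ∃ x y : Expansion, Quot.mk ident x = u ∧ Quot.mk ident y = v ∧ lexLt x y

noncomputable section

def g (n : ℕ) : ℝ := 9 / 10 ^ (n+1)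
def d (x : Expansion) (n : ℕ) : ℝ := (x.2 n : ℝ) / 10 ^ (n+1)

lemma g_eq (n : ℕ) : g n = (9/10) * (1/10)^n := by
  simp [g, pow_succ, div_pow]; ring

lemma summable_g : Summable g := by
  simp only [funext g_eq]
  exact (summable_geometric_of_lt_one (by norm_num) (by norm_num)).mul_left _

lemma tsum_g : ∑' n, g n = 1 := by
  simp only [funext g_eq]
  rw [tsum_mul_left, tsum_geometric_of_lt_one (by norm_num) (by norm_num)]
  norm_num

lemma d_nonneg (x : Expansion) (n : ℕ) : 0 ≤ d x n := by
  unfold d; positivity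

lemma d_le_g (x : Expansion) (n : ℕ) : d x n ≤ g n := by
  unfold d g
  gcongr
  exact_mod_cast Nat.le_of_lt_succ (x.2 n).isLt

lemma summable_d (x : Expansion) : Summable (d x) :=
  Summable.of_nonneg_of_le (d_nonneg x) (d_le_g x) summable_g

lemma tail_g (N : ℕ) : ∑' m, g (m + N) = 1 / 10 ^ N := by
  have : ∀ m, g (m + N) = (1/10^N) * g m := by
    intro m; unfold g; rw [show m + N + 1 = (m+1) + N by ring, pow_add]
    field_simp
  rw [tsum_congr this, tsum_mul_left, tsum_g, mul_one]

lemma tail_le (x : Expansion) (N : ℕ) : ∑' m, d x (m + N) ≤ 1 / 10 ^ N := by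
  rw [← tail_g N]
  exact Summable.tsum_le_tsum (fun m => d_le_g x _) ((summable_d x).comp_injective (add_left_injective N)) (summable_g.comp_injective (add_left_injective N))

lemma tail_nonneg (x : Expansion) (N : ℕ) : 0 ≤ ∑' m, d x (m + N) :=
  tsum_nonneg fun m => d_nonneg x _

def val (x : Expansion) : ℝ := x.1 + ∑' n, d x n
def P (x : Expansion) (N : ℕ) : ℝ := x.1 + ∑ m ∈ Finset.range N, d x m

lemma val_split (x : Expansion) (N : ℕ) : val x = P x N + ∑' m, d x (m + N) := by
  rw [val, P, ← Summable.sum_add_tsum_nat_add N (summable_d x), add_assoc]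

lemma P_le_val (x : Expansion) (N : ℕ) : P x N ≤ val x := by
  rw [val_split x N]; linarith [tail_nonneg x N]

lemma val_le_P (x : Expansion) (N : ℕ) : val x ≤ P x N + 1 / 10 ^ N := by
  rw [val_split x N]; linarith [tail_le x N]

lemma tail_eq_of (x : Expansion) (N : ℕ) (h : ∑' m, d x (m + N) = 1 / 10 ^ N) :
    ∀ m, N ≤ m → (x.2 m : ℕ) = 9 := by
  intro m hm
  by_contra hne
  have h9 : d x m < g m := by
    unfold d g
    gcongr
    have := Nat.le_of_lt_succ (x.2 m).isLt
    have : (x.2 m : ℕ) < 9 := lt_of_le_of_ne this hne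
    exact_mod_cast this
  have key : ∑' k, d x (k + N) < ∑' k, g (k + N) := by
    apply Summable.tsum_lt_tsum (i := m - N) (fun k => d_le_g x _) _
      ((summable_d x).comp_injective (add_left_injective N))
      (summable_g.comp_injective (add_left_injective N))
    rwa [Nat.sub_add_cancel hm]
  rw [h, tail_g] at key
  exact lt_irrefl _ key

-- new lemmas:

lemma tail_zero_of (x : Expansion) (N : ℕ) (h : ∑' m, d x (m + N) = 0) :
    ∀ m, N ≤ m → (x.2 m : ℕ) = 0 := by
  intro m hm
  have hterm : d x m ≤ 0 := by
    have := Summable.le_tsum ((summable_d x).comp_injective (add_left_injective N)) (m - N)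
      (fun j _ => d_nonneg x _)
    simp only [Function.comp] at this
    rw [h] at this
    simpa [Nat.sub_add_cancel hm] using this
  have h0 : d x m = 0 := le_antisymm hterm (d_nonneg x m)
  unfold d at h0
  have : (x.2 m : ℝ) = 0 := by
    field_simp at h0; simpa using h0
  exact_mod_cast this

lemma tail_full_of (x : Expansion) (N : ℕ) (h : ∀ m, N ≤ m → (x.2 m : ℕ) = 9) :
    ∑' m, d x (m + N) = 1 / 10 ^ N := by
  rw [← tail_g N]
  apply tsum_congr
  intro k
  unfold d g
  rw [h (k + N) (Nat.le_add_left N k)]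
  norm_num

lemma tail_zero_full_of (x : Expansion) (N : ℕ) (h : ∀ m, N ≤ m → (x.2 m : ℕ) = 0) :
    ∑' m, d x (m + N) = 0 := by
  have : ∀ k, d x (k + N) = 0 := by
    intro k
    unfold d
    rw [h (k + N) (Nat.le_add_left N k)]
    norm_num
  rw [tsum_congr this, tsum_zero]

lemma val_nonneg (x : Expansion) : 0 ≤ val x := by
  have := tail_nonneg x 0
  simp only [add_zero] at this
  unfold val
  positivity

lemma val_le_head (x : Expansion) : val x ≤ x.1 + 1 := by
  have := val_le_P x 0
  simpa [P] using this

lemma head_le_val (x : Expansion) : (x.1 : ℝ) ≤ val x := by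
  have := P_le_val x 0
  simpa [P] using this

lemma P_congr {x y : Expansion} (N : ℕ) (h1 : x.1 = y.1) (h2 : ∀ m < N, x.2 m = y.2 m) :
    P x N = P y N := by
  unfold P
  rw [h1]
  congr 1
  apply Finset.sum_congr rfl
  intro m hm
  unfold d
  rw [h2 m (Finset.mem_range.mp hm)]

lemma P_succ (x : Expansion) (N : ℕ) : P x (N+1) = P x N + d x N := by
  unfold P
  rw [Finset.sum_range_succ, add_assoc]

lemma lex_chain {x y : Expansion} (h1 : x.1 = y.1) (n : ℕ)
    (h2 : ∀ m < n, x.2 m = y.2 m) (h3 : x.2 n < y.2 n) :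
    val x ≤ P x n + ((x.2 n : ℝ) + 1) / 10 ^ (n+1) ∧
    P x n + ((x.2 n : ℝ) + 1) / 10 ^ (n+1) ≤ P x n + (y.2 n : ℝ) / 10 ^ (n+1) ∧
    P x n + (y.2 n : ℝ) / 10 ^ (n+1) = P y (n+1) ∧
    P y (n+1) ≤ val y := by
  refine ⟨?_, ?_, ?_, P_le_val y (n+1)⟩
  · have := val_le_P x (n+1)
    rw [P_succ] at this
    unfold d at this
    calc val x ≤ x.1 + ∑ m ∈ Finset.range n, d x m + (x.2 n : ℝ)/10^(n+1) + 1/10^(n+1) := this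
    _ = P x n + ((x.2 n : ℝ) + 1) / 10 ^ (n+1) := by unfold P; ring
  · gcongr
    have : (x.2 n : ℕ) + 1 ≤ (y.2 n : ℕ) := h3
    exact_mod_cast this
  · rw [P_succ, P_congr n h1 h2]; rfl

lemma val_mono {x y : Expansion} (h : lexLt x y) : val x ≤ val y := by
  rcases h with h | ⟨h1, n, h2, h3⟩
  · calc val x ≤ x.1 + 1 := val_le_head x
      _ ≤ (y.1 : ℝ) := by exact_mod_cast h
      _ ≤ val y := head_le_val y
  · obtain ⟨a, b, c, e⟩ := lex_chain h1 n h2 h3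
    linarith

lemma val_nineTail {x y : Expansion} (h : nineTail x y) : val x = val y := by
  rcases h with ⟨h9, hh, h0⟩ | ⟨N, h1, h2, h3, h45⟩
  · have hx : val x = x.1 + 1 := by
      have := val_split x 0
      rw [tail_full_of x 0 (fun m _ => h9 m)] at this
      simpa [P] using this
    have hy : val y = y.1 := by
      have := val_split y 0
      rw [tail_zero_full_of y 0 (fun m _ => h0 m)] at this
      simpa [P] using this
    rw [hx, hy, hh]; push_cast; ring
  · have hx : val x = P x (N+1) + 1 / 10 ^ (N+1) := by
      rw [val_split x (N+1), tail_full_of x (N+1) (fun m hm => (h45 m hm).1)]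
    have hy : val y = P y (N+1) := by
      rw [val_split y (N+1), tail_zero_full_of y (N+1) (fun m hm => (h45 m hm).2), add_zero]
    rw [hx, hy, P_succ, P_succ, P_congr N h1 h2]
    unfold d
    have : (x.2 N : ℝ) + 1 = (y.2 N : ℝ) := by exact_mod_cast h3
    rw [← this]
    ring

lemma lexLt_trichotomy (x y : Expansion) : x = y ∨ lexLt x y ∨ lexLt y x := by
  rcases lt_trichotomy x.1 y.1 with h | h | h
  · exact Or.inr (Or.inl (Or.inl h))
  · by_cases hs : x.2 = y.2
    · exact Or.inl (Prod.ext h hs)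
    · have hex : ∃ n, x.2 n ≠ y.2 n := by
        by_contra hc
        push_neg at hc
        exact hs (funext hc)
      classical
      let n := Nat.find hex
      have hn : x.2 n ≠ y.2 n := Nat.find_spec hex
      have hlt : ∀ m < n, x.2 m = y.2 m := fun m hm => by
        have := Nat.find_min hex hm
        simpa using this
      rcases lt_or_gt_of_ne hn with hl | hl
      · exact Or.inr (Or.inl (Or.inr ⟨h, n, hlt, hl⟩))
      · exact Or.inr (Or.inr (Or.inr ⟨h.symm, n, fun m hm => (hlt m hm).symm, hl⟩))
  · exact Or.inr (Or.inr (Or.inl h))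

lemma nineTail_of_eq {x y : Expansion} (hlt : lexLt x y) (heq : val x = val y) :
    nineTail x y := by
  rcases hlt with h | ⟨h1, n, h2, h3⟩
  · -- head case
    have c1 : val x ≤ x.1 + 1 := val_le_head x
    have c2 : (x.1 : ℝ) + 1 ≤ (y.1 : ℝ) := by exact_mod_cast h
    have c3 : (y.1 : ℝ) ≤ val y := head_le_val y
    have e1 : val x = x.1 + 1 := by linarith
    have e2 : (y.1 : ℝ) = val y := by linarith
    have hx9 : ∀ m, (x.2 m : ℕ) = 9 := by
      have hs := val_split x 0
      rw [e1] at hs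
      have : ∑' m, d x (m + 0) = 1 / 10 ^ 0 := by
        simp only [P, Finset.range_zero, Finset.sum_empty, add_zero] at hs
        simp only [add_zero, pow_zero, div_one]
        linarith
      exact fun m => tail_eq_of x 0 this m (Nat.zero_le m)
    have hy1 : y.1 = x.1 + 1 := by
      have : (y.1 : ℝ) = (x.1 : ℝ) + 1 := by rw [e2, ← heq, e1]
      exact_mod_cast this
    have hy0 : ∀ m, (y.2 m : ℕ) = 0 := by
      have hs := val_split y 0
      rw [← e2] at hs
      have : ∑' m, d y (m + 0) = 0 := by
        simp only [P, Finset.range_zero, Finset.sum_empty, add_zero] at hs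
        simp only [add_zero]
        linarith
      exact fun m => tail_zero_of y 0 this m (Nat.zero_le m)
    exact Or.inl ⟨hx9, hy1, hy0⟩
  · obtain ⟨a, b, c, e⟩ := lex_chain h1 n h2 h3
    rw [heq] at a
    -- all inequalities are equalities
    have e1 : val y = P x n + ((x.2 n : ℝ) + 1) / 10 ^ (n+1) := by linarith
    have e2 : P x n + ((x.2 n : ℝ) + 1) / 10 ^ (n+1) = P x n + (y.2 n : ℝ) / 10 ^ (n+1) := by
      linarith
    have hdig : (x.2 n : ℕ) + 1 = (y.2 n : ℕ) := by
      have : ((x.2 n : ℝ) + 1) / 10 ^ (n+1) = (y.2 n : ℝ) / 10 ^ (n+1) := by linarith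
      have h10 : (0:ℝ) < 10 ^ (n+1) := by positivity
      field_simp at this
      exact_mod_cast this
    have hx9 : ∀ m, n < m → (x.2 m : ℕ) = 9 := by
      have hxeq : val x = P x (n+1) + 1 / 10^(n+1) := by
        rw [heq, e1, P_succ]
        unfold d
        ring
      have hs := val_split x (n+1)
      rw [hxeq] at hs
      have : ∑' m, d x (m + (n+1)) = 1 / 10 ^ (n+1) := by linarith
      exact fun m hm => tail_eq_of x (n+1) this m hm
    have hy0 : ∀ m, n < m → (y.2 m : ℕ) = 0 := by
      have hyeq : val y = P y (n+1) := by rw [e1, e2, c]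
      have hs := val_split y (n+1)
      rw [hyeq] at hs
      have : ∑' m, d y (m + (n+1)) = 0 := by linarith
      exact fun m hm => tail_zero_of y (n+1) this m hm
    exact Or.inr ⟨n, h1, h2, hdig, fun m hm => ⟨hx9 m hm, hy0 m hm⟩⟩

lemma val_ident {x y : Expansion} (h : ident x y) : val x = val y := by
  rcases h with h | h
  · exact val_nineTail h
  · exact (val_nineTail h).symm

def valQ : RPlus → ℝ := Quot.lift val (fun _ _ h => val_ident h)

lemma mk_eq_of_val_eq {x y : Expansion} (h : val x = val y) :
    Quot.mk ident x = Quot.mk ident y := by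
  rcases lexLt_trichotomy x y with he | hl | hl
  · rw [he]
  · exact Quot.sound (Or.inl (nineTail_of_eq hl h))
  · exact (Quot.sound (show ident y x from Or.inl (nineTail_of_eq hl h.symm))).symm

lemma le_iff (u v : RPlus) : le u v ↔ valQ u ≤ valQ v := by
  constructor
  · rintro (rfl | ⟨x, y, hx, hy, hl⟩)
    · exact le_refl _
    · rw [← hx, ← hy]
      exact val_mono hl
  · induction u using Quot.ind with | _ x =>
    induction v using Quot.ind with | _ y =>
    intro h
    rcases eq_or_lt_of_le h with he | hlt
    · exact Or.inl (mk_eq_of_val_eq he)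
    · refine Or.inr ⟨x, y, rfl, rfl, ?_⟩
      rcases lexLt_trichotomy x y with he | hl | hl
      · exact absurd (by rw [he]) (ne_of_lt hlt : valQ _ ≠ valQ _)
      · exact hl
      · exact absurd (val_mono hl) (not_le.mpr hlt)

lemma exists_expansion (r : ℝ) (hr : 0 ≤ r) : ∃ x : Expansion, val x = r := by
  set a0 : ℕ := ⌊r⌋₊ with ha0
  set f : ℝ := r - a0 with hfdef
  have hf0 : 0 ≤ f := by
    have := Nat.floor_le hr
    simp [hfdef]; linarith
  have hf1 : f < 1 := by
    have := Nat.lt_floor_add_one r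
    simp only [hfdef]
    linarith
  set F : ℕ → ℕ := fun N => ⌊10 ^ N * f⌋₊ with hF
  have hFle : ∀ N, (F N : ℝ) ≤ 10 ^ N * f := fun N => Nat.floor_le (by positivity)
  have hFlt : ∀ N, 10 ^ N * f < F N + 1 := fun N => Nat.lt_floor_add_one _
  have h1 : ∀ N, 10 * F N ≤ F (N + 1) := by
    intro N
    apply Nat.le_floor
    push_cast
    calc (10:ℝ) * F N ≤ 10 * (10 ^ N * f) := by linarith [hFle N]
      _ = 10 ^ (N+1) * f := by ring
  have h2 : ∀ N, F (N + 1) < 10 * F N + 10 := by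
    intro N
    have : (10:ℝ) ^ (N+1) * f < 10 * F N + 10 := by
      have := hFlt N
      calc (10:ℝ)^(N+1) * f = 10 * (10 ^ N * f) := by ring
        _ < 10 * (F N + 1) := by linarith
        _ = 10 * F N + 10 := by ring
    refine (Nat.floor_lt (by positivity : (0:ℝ) ≤ 10 ^ (N+1) * f)).mpr ?_
    push_cast
    linarith
  set x : Expansion := (a0, fun N => ⟨F (N+1) - 10 * F N, by have := h1 N; have := h2 N; omega⟩) with hx
  have hd : ∀ N, d x N = ((F (N+1) : ℝ) - 10 * F N) / 10 ^ (N+1) := by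
    intro N
    unfold d
    rw [hx]
    congr 1
    push_cast [Nat.cast_sub (h1 N)]
    ring
  have hPsum : ∀ N, ∑ m ∈ Finset.range N, d x m = (F N : ℝ) / 10 ^ N := by
    intro N
    induction N with
    | zero =>
      simp [hF, Nat.floor_eq_zero.mpr (by simpa using hf1)]
    | succ N ih =>
      rw [Finset.sum_range_succ, ih, hd N]
      field_simp
      ring
  have hP : ∀ N, P x N = a0 + (F N : ℝ) / 10 ^ N := by
    intro N; rw [P, hPsum N]
  have happrox : ∀ N : ℕ, |val x - r| ≤ 2 / 10 ^ N := by
    intro N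
    have hpow : (0:ℝ) < 10 ^ N := by positivity
    have hr1 : 0 ≤ f - (F N : ℝ) / 10 ^ N := by
      have := hFle N
      rw [sub_nonneg, div_le_iff₀ hpow]
      linarith
    have hr2 : f - (F N : ℝ) / 10 ^ N < 1 / 10 ^ N := by
      have := hFlt N
      rw [sub_lt_iff_lt_add, ← add_div, lt_div_iff₀ hpow]
      linarith
    have hrP : r = P x N + (f - (F N : ℝ) / 10 ^ N) := by
      rw [hP N, hfdef]; ring
    have hv1 := P_le_val x N
    have hv2 := val_le_P x N
    have hp2 : (0:ℝ) < 1 / 10 ^ N := by positivity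
    have h2t : (2:ℝ) / 10 ^ N = 2 * (1 / 10 ^ N) := by ring
    rw [abs_le]
    exact ⟨by linarith, by linarith⟩
  -- conclude val x = r
  refine ⟨x, ?_⟩
  by_contra hne
  have hpos : 0 < |val x - r| := abs_pos.mpr (sub_ne_zero.mpr hne)
  obtain ⟨N, hN⟩ := pow_unbounded_of_one_lt (2 / |val x - r|) (by norm_num : (1:ℝ) < 10)
  have : 2 / 10 ^ N < |val x - r| := by
    rw [div_lt_iff₀ (by positivity)]
    rw [div_lt_iff₀ hpos] at hN
    linarith
  linarith [happrox N]


lemma valQ_nonneg (u : RPlus) : 0 ≤ valQ u := by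
  induction u using Quot.ind with | _ x => exact val_nonneg x

end

theorem stmt_12 (S : Set RPlus) (hne : S.Nonempty)
    (hbdd : ∃ b : RPlus, ∀ x ∈ S, le x b) :
    ∃ l : RPlus, (∀ x ∈ S, le x l) ∧ ∀ b : RPlus, (∀ x ∈ S, le x b) → le l b := by
  obtain ⟨b, hb⟩ := hbdd
  obtain ⟨u0, hu0⟩ := hne
  set T : Set ℝ := valQ '' S with hT
  have hTne : T.Nonempty := ⟨valQ u0, ⟨u0, hu0, rfl⟩⟩
  have hTbdd : BddAbove T := ⟨valQ b, by rintro t ⟨u, hu, rfl⟩; exact (le_iff u b).mp (hb u hu)⟩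
  have hr0 : 0 ≤ sSup T := le_trans (valQ_nonneg u0) (le_csSup hTbdd ⟨u0, hu0, rfl⟩)
  obtain ⟨z, hz⟩ := exists_expansion (sSup T) hr0
  refine ⟨Quot.mk ident z, ?_, ?_⟩
  · intro u hu
    apply (le_iff u _).mpr
    show valQ u ≤ val z
    rw [hz]
    exact le_csSup hTbdd ⟨u, hu, rfl⟩
  · intro c hc
    apply (le_iff _ c).mpr
    show val z ≤ valQ c
    rw [hz]
    exact csSup_le hTne (by rintro t ⟨u, hu, rfl⟩; exact (le_iff u c).mp (hc u hu))

end Stmt12
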